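/- arXiv:2111.05899 — 3 statements merged into one kernel-verified Lean document; each statement's English description precedes it below -/
import Mathlib

section
/- Let m ≠ ±1 be a squarefree integer with m ≢ 1 (mod 4), m ≢ ±1 (mod 9), and m ≢ ±1, ±7 (mod 25), and let α be a complex root of the irreducible polynomial F(x) = x^60 − m over ℚ. Then the number field K = ℚ(α) is monogenic. -/
open Polynomial NumberField

/-!
For an algebraic integer `z` of `K`, the integers `c` with `c • z ∈ ℤ[α]` form an ideal of `ℤ`,
so `z ∈ ℤ[α]` as soon as, for every prime `p`, such a `c` can be found prime to `p`.
If `p ∣ m`, the polynomial `X ^ 60 - m` is Eisenstein at `p`. If `p ∤ 60 m`, the discriminant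
`± 60 ^ 60 m ^ 59` of `ℤ[α]` is such a `c`. For `p ∈ {2, 3, 5}` write `60 = p ^ k e` with `p ∤ e`
and go through `F = ℚ(α ^ e)`, a pure field of degree `p ^ k`: `ℤ[α ^ e]` is the ring of integers
of `F` because `(X + m) ^ p ^ k - m` is Eisenstein at `p` exactly when `p ^ 2 ∤ m ^ p ^ k - m`,
which is what the congruence conditions on `m` say, and the discriminant `± e ^ e (α ^ e) ^ (e - 1)`
of `α` over `F` is prime to `p` after multiplication by a power of `α ^ e`.
-/

theorem Int.ideal_eq_top_of_forall_prime_exists_not_dvd {I : Ideal ℤ}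
    (h : ∀ p : ℕ, p.Prime → ∃ c ∈ I, ¬ (p : ℤ) ∣ c) : I = ⊤ := by
  obtain ⟨g, rfl⟩ := (IsPrincipalIdealRing.principal I).principal
  rw [Ideal.submodule_span_eq, Ideal.span_singleton_eq_top, Int.isUnit_iff_natAbs_eq]
  by_contra hg
  obtain ⟨p, hp, hpg⟩ := Nat.exists_prime_and_dvd hg
  obtain ⟨c, hc, hpc⟩ := h p hp
  exact hpc ((Int.natCast_dvd.mpr hpg).trans (Ideal.mem_span_singleton.mp hc))

theorem Subalgebra.mem_of_forall_prime_exists_not_dvd_smul_mem {A : Type*} [Ring A]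
    {S : Subalgebra ℤ A} {z : A} (h : ∀ p : ℕ, p.Prime → ∃ c : ℤ, ¬ (p : ℤ) ∣ c ∧ c • z ∈ S) :
    z ∈ S := by
  have htop : (toSubmodule S).colon {z} = ⊤ := Int.ideal_eq_top_of_forall_prime_exists_not_dvd
    fun p hp ↦ let ⟨c, hpc, hc⟩ := h p hp; ⟨c, Submodule.mem_colon_singleton.mpr hc, hpc⟩
  simpa using Submodule.mem_colon_singleton.mp (htop ▸ Submodule.mem_top :
    (1 : ℤ) ∈ (toSubmodule S).colon {z})

theorem Prime.dvd_or_dvd_of_dvd_mul_pow_mul_pow {M : Type*} [CommMonoidWithZero M]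
    {p s a b : M} {i j : ℕ} (hp : Prime p) (hs : IsUnit s) (h : p ∣ s * a ^ i * b ^ j) :
    p ∣ a ∨ p ∣ b := by
  rcases hp.dvd_or_dvd h with h | h
  · rcases hp.dvd_or_dvd h with h | h
    · exact (hp.not_isUnit (isUnit_of_dvd_unit h hs)).elim
    · exact .inl (hp.dvd_of_dvd_pow h)
  · exact .inr (hp.dvd_of_dvd_pow h)

theorem minpoly_eq_of_aeval_eq_zero_of_natDegree_le {K A : Type*} [Field K] [Ring A]
    [Algebra K A] {x : A} {q : K[X]} (hq : q.Monic) (h0 : aeval x q = 0)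
    (hle : q.natDegree ≤ (minpoly K x).natDegree) : minpoly K x = q :=
  (eq_of_monic_of_dvd_of_natDegree_le (minpoly.monic ⟨q, hq, h0⟩) hq (minpoly.dvd K x h0) hle).symm

theorem Nat.eq_and_eq_of_le_of_le_of_mul_eq {a b d e : ℕ} (had : a ≤ d) (hbe : b ≤ e)
    (h : a * b = d * e) (hde : d * e ≠ 0) : a = d ∧ b = e := by
  obtain ⟨hd, he⟩ := Nat.mul_ne_zero_iff.mp hde
  have had' : a = d := had.eq_of_not_lt fun hlt ↦
    (Nat.mul_lt_mul_of_lt_of_le hlt hbe (Nat.pos_of_ne_zero he)).ne h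
  exact ⟨had', Nat.eq_of_mul_eq_mul_left (Nat.pos_of_ne_zero hd) (had' ▸ h)⟩

section RatInt

variable {L : Type*} [Field L] [Algebra ℚ L] {x : L} {f : ℤ[X]}

theorem isIntegral_int_of_minpoly_rat_eq (hf : f.Monic)
    (h : minpoly ℚ x = f.map (algebraMap ℤ ℚ)) : IsIntegral ℤ x :=
  ⟨f, hf, by rw [← aeval_def, ← aeval_map_algebraMap ℚ, ← h, minpoly.aeval]⟩

theorem minpoly_int_eq_of_minpoly_rat_eq (hx : IsIntegral ℤ x)
    (h : minpoly ℚ x = f.map (algebraMap ℤ ℚ)) : minpoly ℤ x = f :=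
  map_injective _ (algebraMap ℤ ℚ).injective_int
    ((minpoly.isIntegrallyClosed_eq_field_fractions' ℚ hx).symm.trans h)

end RatInt

theorem Algebra.adjoin_singleton_sub_algebraMap {R A : Type*} [CommRing R] [Ring A]
    [Algebra R A] (x : A) (r : R) : adjoin R {x - algebraMap R A r} = adjoin R {x} :=
  le_antisymm (adjoin_singleton_le (sub_mem (self_mem_adjoin_singleton R x) (algebraMap_mem _ r)))
    (adjoin_singleton_le (by
      simpa using
        add_mem (self_mem_adjoin_singleton R (x - algebraMap R A r)) (algebraMap_mem _ r)))

theorem PowerBasis.discr_of_minpoly_eq_X_pow_sub_C {F L : Type*} [Field F] [Field L]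
    [Algebra F L] [Algebra.IsSeparable F L] (B : PowerBasis F L) {n : ℕ} {c : F}
    (hmin : minpoly F B.gen = X ^ n - C c) :
    ∃ s : ℤ, IsUnit s ∧ Algebra.discr F B.basis = s * n ^ n * c ^ (n - 1) := by
  have := B.finite
  have hdim : B.dim = n := by rw [← B.natDegree_minpoly, hmin, natDegree_X_pow_sub_C]
  have hn : n ≠ 0 := hdim ▸ B.dim_ne_zero
  have hnorm : Algebra.norm F B.gen = (-1) ^ (n + 1) * c := by
    rw [Algebra.PowerBasis.norm_gen_eq_coeff_zero_minpoly, hmin, hdim, coeff_sub, coeff_X_pow,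
      coeff_C_zero, if_neg (Ne.symm hn), pow_succ]
    ring
  refine ⟨(-1) ^ (n * (n - 1) / 2) * (-1) ^ ((n + 1) * (n - 1)),
    (isUnit_one.neg.pow _).mul (isUnit_one.neg.pow _), ?_⟩
  rw [Algebra.discr_powerBasis_eq_norm, hmin, derivative_sub, derivative_C, sub_zero,
    derivative_X_pow, map_mul, aeval_C, map_pow, aeval_X, map_mul, map_pow, hnorm,
    Algebra.norm_algebraMap, B.finrank, hdim]
  push_cast
  ring

theorem smul_mem_adjoin_of_minpoly_eq_X_pow_sub_C {R F L : Type*} [CommRing R] [IsDomain R]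
    [IsIntegrallyClosed R] [Field F] [Algebra R F] [IsFractionRing R F] [Field L] [Algebra F L]
    [Algebra R L] [IsScalarTower R F L] [Algebra.IsSeparable F L] {B : PowerBasis F L}
    (hB : IsIntegral R B.gen) {n : ℕ} {c : F} (hmin : minpoly F B.gen = X ^ n - C c) {z : L}
    (hz : IsIntegral R z) :
    ∃ s : ℤ, IsUnit s ∧
      (s * n ^ n : ℤ) • (algebraMap F L c ^ (n - 1) * z) ∈ Algebra.adjoin R {B.gen} := by
  have := B.finite
  obtain ⟨s, hs, hdisc⟩ := B.discr_of_minpoly_eq_X_pow_sub_C hmin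
  refine ⟨s, hs, ?_⟩
  convert Algebra.discr_mul_isIntegral_mem_adjoin (R := R) (K := F) (hint := hB) hz using 1
  rw [hdisc, Algebra.smul_def, Algebra.smul_def]
  simp only [map_mul, map_pow, map_intCast, map_natCast, eq_intCast]
  ring

theorem isEisensteinAt_X_pow_sub_C {n : ℕ} (hn : n ≠ 0) {m p : ℤ} (hp : Prime p) (hpm : p ∣ m)
    (hsf : Squarefree m) : (X ^ n - C m : ℤ[X]).IsEisensteinAt (Submodule.span ℤ {p}) := by
  refine (monic_X_pow_sub_C m hn).isEisensteinAt_of_mem_of_notMem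
    (by simpa [Ideal.span_singleton_eq_top] using hp.not_isUnit) (fun {i} hi ↦ ?_) ?_
  · rw [natDegree_X_pow_sub_C] at hi
    rw [coeff_sub, coeff_X_pow, if_neg hi.ne, coeff_C, zero_sub, neg_mem_iff]
    split_ifs
    · exact Ideal.mem_span_singleton.mpr hpm
    · exact zero_mem _
  · rw [coeff_sub, coeff_X_pow, if_neg (Ne.symm hn), coeff_C_zero, zero_sub, neg_mem_iff,
      Ideal.span_singleton_pow, Ideal.mem_span_singleton, sq]
    exact fun h ↦ hp.not_isUnit (hsf p h)

theorem isEisensteinAt_X_add_C_pow_sub_C {p k : ℕ} (hp : p.Prime) {a m : ℤ}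
    (ha : (p : ℤ) ∣ a ^ p ^ k - m) (ha2 : ¬ (p : ℤ) ^ 2 ∣ a ^ p ^ k - m) :
    ((X + C a) ^ p ^ k - C m : ℤ[X]).IsEisensteinAt (Submodule.span ℤ {(p : ℤ)}) := by
  have hcomp : ((X + C a) ^ p ^ k - C m : ℤ[X]) = (X ^ p ^ k - C m).comp (X + C a) := by
    simp [sub_comp]
  have hdeg : ((X + C a) ^ p ^ k - C m : ℤ[X]).natDegree = p ^ k := by
    rw [hcomp, natDegree_comp, natDegree_X_pow_sub_C, natDegree_X_add_C, mul_one]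
  refine (hcomp ▸ (monic_X_pow_sub_C m (pow_ne_zero k hp.ne_zero)).comp_X_add_C a
    : ((X + C a) ^ p ^ k - C m : ℤ[X]).Monic).isEisensteinAt_of_mem_of_notMem
    (by simpa [Ideal.span_singleton_eq_top] using (Nat.prime_iff_prime_int.mp hp).not_isUnit)
    (fun {i} hi ↦ ?_) ?_
  · rw [hdeg] at hi
    rw [coeff_sub, coeff_X_add_C_pow, coeff_C, Ideal.mem_span_singleton]
    rcases eq_or_ne i 0 with rfl | hi0
    · simpa using ha
    · rw [if_neg hi0, sub_zero]
      exact (Int.natCast_dvd_natCast.mpr (hp.dvd_choose_pow hi0 hi.ne)).mul_left _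
  · rw [coeff_sub, coeff_X_add_C_pow, coeff_C_zero, Ideal.span_singleton_pow,
      Ideal.mem_span_singleton]
    simpa using ha2

theorem exists_not_dvd_smul_mem_adjoin_of_isEisensteinAt {L : Type*} [Field L] [Algebra ℚ L]
    {B : PowerBasis ℚ L} (hB : IsIntegral ℤ B.gen) {p : ℤ} (hp : Prime p)
    (hei : (minpoly ℤ B.gen).IsEisensteinAt (Submodule.span ℤ {p})) {D : ℤ} (hD : D ≠ 0)
    {z : L} (hz : IsIntegral ℤ z) (hDz : D • z ∈ Algebra.adjoin ℤ {B.gen}) :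
    ∃ c : ℤ, ¬ p ∣ c ∧ c • z ∈ Algebra.adjoin ℤ {B.gen} := by
  obtain ⟨c, hDc, hpc⟩ := (Int.finiteMultiplicity_iff.2
    ⟨fun h ↦ hp.not_isUnit (Int.isUnit_iff_natAbs_eq.2 h), hD⟩).exists_eq_pow_mul_and_not_dvd
  refine ⟨c, hpc, mem_adjoin_of_smul_prime_pow_smul_of_minpoly_isEisensteinAt hp hB
    (n := multiplicity p D) (hz.smul c) ?_ hei⟩
  rwa [smul_smul, ← hDc]

section PureField

variable {L : Type*} [Field L] [Algebra ℚ L] [FiniteDimensional ℚ L] {n : ℕ} {m : ℤ} {x : L}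

theorem ne_zero_of_minpoly_eq_X_pow_sub_C (hx : minpoly ℚ x = X ^ n - C (m : ℚ)) : n ≠ 0 := by
  have := (minpoly.natDegree_pos (Algebra.IsIntegral.isIntegral (R := ℚ) x)).ne'
  rwa [hx, natDegree_X_pow_sub_C] at this

theorem isIntegral_of_minpoly_eq_X_pow_sub_C (hx : minpoly ℚ x = X ^ n - C (m : ℚ)) :
    IsIntegral ℤ x :=
  isIntegral_int_of_minpoly_rat_eq (monic_X_pow_sub_C m (ne_zero_of_minpoly_eq_X_pow_sub_C hx))
    (by simp [hx])

theorem exists_smul_mem_adjoin_of_minpoly_eq_X_pow_sub_C (hsf : Squarefree m)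
    (hx : minpoly ℚ x = X ^ n - C (m : ℚ)) (hgen : Algebra.adjoin ℚ {x} = ⊤) {z : L}
    (hz : IsIntegral ℤ z) :
    ∃ D : ℤ, D ≠ 0 ∧ (∀ q : ℤ, Prime q → q ∣ D → q ∣ n ∨ q ∣ m) ∧
      D • z ∈ Algebra.adjoin ℤ {x} := by
  have hxZ := isIntegral_of_minpoly_eq_X_pow_sub_C hx
  obtain ⟨s, hs, hmem⟩ := smul_mem_adjoin_of_minpoly_eq_X_pow_sub_C
    (B := PowerBasis.ofAdjoinEqTop hxZ.tower_top hgen) hxZ hx hz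
  rw [PowerBasis.ofAdjoinEqTop_gen] at hmem
  refine ⟨s * n ^ n * m ^ (n - 1), mul_ne_zero (mul_ne_zero hs.ne_zero (pow_ne_zero _
    (by exact_mod_cast ne_zero_of_minpoly_eq_X_pow_sub_C hx))) (pow_ne_zero _ hsf.ne_zero),
    fun q hq hqD ↦ hq.dvd_or_dvd_of_dvd_mul_pow_mul_pow hs hqD, ?_⟩
  convert hmem using 1
  rw [zsmul_eq_mul, zsmul_eq_mul, map_intCast]
  push_cast
  ring

theorem exists_not_dvd_smul_mem_adjoin_of_minpoly_eq_X_pow_sub_C (hsf : Squarefree m)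
    (hx : minpoly ℚ x = X ^ n - C (m : ℚ)) (hgen : Algebra.adjoin ℚ {x} = ⊤) {p : ℕ}
    (hp : p.Prime) (hpnm : ¬ (p : ℤ) ∣ n ∨ (p : ℤ) ∣ m) {z : L} (hz : IsIntegral ℤ z) :
    ∃ c : ℤ, ¬ (p : ℤ) ∣ c ∧ c • z ∈ Algebra.adjoin ℤ {x} := by
  obtain ⟨D, hD, hDprime, hDz⟩ := exists_smul_mem_adjoin_of_minpoly_eq_X_pow_sub_C hsf hx hgen hz
  have hpZ : Prime (p : ℤ) := Nat.prime_iff_prime_int.mp hp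
  by_cases hpm : (p : ℤ) ∣ m
  · have hxZ := isIntegral_of_minpoly_eq_X_pow_sub_C hx
    refine exists_not_dvd_smul_mem_adjoin_of_isEisensteinAt
      (B := PowerBasis.ofAdjoinEqTop hxZ.tower_top hgen) hxZ hpZ ?_ hD hz hDz
    rw [PowerBasis.ofAdjoinEqTop_gen, minpoly_int_eq_of_minpoly_rat_eq hxZ (f := X ^ n - C m)
      (by simp [hx])]
    exact isEisensteinAt_X_pow_sub_C (ne_zero_of_minpoly_eq_X_pow_sub_C hx) hpZ hpm hsf
  · exact ⟨D, fun hpD ↦ (hDprime _ hpZ hpD).elim (hpnm.resolve_right hpm) hpm, hDz⟩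

theorem mem_adjoin_of_minpoly_eq_X_pow_sub_C_of_prime_pow {p k : ℕ} (hp : p.Prime)
    (hsf : Squarefree m) (hm : ¬ (p : ℤ) ^ 2 ∣ m ^ p ^ k - m)
    (hx : minpoly ℚ x = X ^ p ^ k - C (m : ℚ)) (hgen : Algebra.adjoin ℚ {x} = ⊤) {z : L}
    (hz : IsIntegral ℤ z) : z ∈ Algebra.adjoin ℤ {x} := by
  refine Subalgebra.mem_of_forall_prime_exists_not_dvd_smul_mem fun q hq ↦ ?_
  rcases eq_or_ne q p with rfl | hqp
  · have hdvd : (q : ℤ) ∣ m ^ q ^ k - m := by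
      rw [← ZMod.intCast_zmod_eq_zero_iff_dvd]
      have := Fact.mk hq
      push_cast
      rw [ZMod.pow_card_pow, sub_self]
    have hminy : minpoly ℚ (x - algebraMap ℚ L m) =
        ((X + C m) ^ q ^ k - C m : ℤ[X]).map (algebraMap ℤ ℚ) := by
      rw [minpoly.sub_algebraMap, hx]
      simp [sub_comp]
    have hyZ := isIntegral_int_of_minpoly_rat_eq (by
      simpa [sub_comp] using (monic_X_pow_sub_C m (pow_ne_zero k hq.ne_zero)).comp_X_add_C m)
      hminy
    have hyQ : Algebra.adjoin ℚ {x - algebraMap ℚ L m} = ⊤ := by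
      rw [Algebra.adjoin_singleton_sub_algebraMap, hgen]
    have hadjZ : Algebra.adjoin ℤ {x - algebraMap ℚ L m} = Algebra.adjoin ℤ {x} := by
      rw [show algebraMap ℚ L m = algebraMap ℤ L m by simp,
        Algebra.adjoin_singleton_sub_algebraMap]
    obtain ⟨D, hD, -, hDz⟩ := exists_smul_mem_adjoin_of_minpoly_eq_X_pow_sub_C hsf hx hgen hz
    rw [← hadjZ] at hDz ⊢
    refine exists_not_dvd_smul_mem_adjoin_of_isEisensteinAt
      (B := PowerBasis.ofAdjoinEqTop hyZ.tower_top hyQ) hyZ (Nat.prime_iff_prime_int.mp hq) ?_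
      hD hz hDz
    rw [PowerBasis.ofAdjoinEqTop_gen, minpoly_int_eq_of_minpoly_rat_eq hyZ hminy]
    exact isEisensteinAt_X_add_C_pow_sub_C hq hdvd hm
  · exact exists_not_dvd_smul_mem_adjoin_of_minpoly_eq_X_pow_sub_C hsf hx hgen hq
      (Or.inl fun h ↦ hqp ((Nat.prime_dvd_prime_iff_eq hq hp).mp
        (hq.dvd_of_dvd_pow (Int.natCast_dvd_natCast.mp h)))) hz

end PureField

section Tower

open IntermediateField

theorem minpoly_pow_eq_X_pow_sub_C {E L : Type*} [Field E] [Field L] [Algebra E L]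
    [FiniteDimensional E L] {x : L} {d e : ℕ} {c : E} (hx : minpoly E x = X ^ (d * e) - C c)
    (hgen : Algebra.adjoin E {x} = ⊤) :
    minpoly E (x ^ e) = X ^ d - C c ∧
      minpoly E⟮x ^ e⟯ x = X ^ e - C (AdjoinSimple.gen E (x ^ e)) := by
  have hxE := Algebra.IsIntegral.isIntegral (R := E) x
  have hde : d * e ≠ 0 := by
    have := (minpoly.natDegree_pos hxE).ne'
    rwa [hx, natDegree_X_pow_sub_C] at this
  have hroot : x ^ (d * e) = algebraMap E L c := by
    simpa [hx, sub_eq_zero] using minpoly.aeval E x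
  have h0 : aeval (x ^ e) (X ^ d - C c) = 0 := by
    rw [map_sub, map_pow, aeval_X, aeval_C, ← pow_mul, mul_comm, hroot, sub_self]
  have h0' : aeval x (X ^ e - C (AdjoinSimple.gen E (x ^ e))) = 0 := by
    rw [map_sub, map_pow, aeval_X, aeval_C, AdjoinSimple.algebraMap_gen, sub_self]
  have hgen' : Algebra.adjoin E⟮x ^ e⟯ {x} = ⊤ := by
    rw [← Algebra.adjoin_adjoin_of_tower E, hgen, Algebra.coe_top, Algebra.adjoin_univ]
  obtain ⟨hd0, he0⟩ := Nat.mul_ne_zero_iff.mp hde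
  have hprod : (minpoly E (x ^ e)).natDegree * (minpoly E⟮x ^ e⟯ x).natDegree = d * e := by
    rw [← adjoin.finrank (hxE.pow e), ← PowerBasis.ofAdjoinEqTop_dim hxE.tower_top hgen',
      ← PowerBasis.finrank, Module.finrank_mul_finrank, (PowerBasis.ofAdjoinEqTop hxE hgen).finrank,
      PowerBasis.ofAdjoinEqTop_dim, hx, natDegree_X_pow_sub_C]
  have hdle : (minpoly E (x ^ e)).natDegree ≤ d := by
    simpa using natDegree_le_of_dvd (minpoly.dvd E _ h0) (X_pow_sub_C_ne_zero hd0.bot_lt c)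
  have hele : (minpoly E⟮x ^ e⟯ x).natDegree ≤ e := by
    simpa using natDegree_le_of_dvd (minpoly.dvd _ _ h0') (X_pow_sub_C_ne_zero he0.bot_lt _)
  obtain ⟨hd, he⟩ := Nat.eq_and_eq_of_le_of_le_of_mul_eq hdle hele hprod hde
  exact ⟨minpoly_eq_of_aeval_eq_zero_of_natDegree_le (monic_X_pow_sub_C _ hd0) h0
      (by rw [natDegree_X_pow_sub_C, hd]),
    minpoly_eq_of_aeval_eq_zero_of_natDegree_le (monic_X_pow_sub_C _ he0) h0'
      (by rw [natDegree_X_pow_sub_C, he])⟩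

theorem exists_not_dvd_smul_mem_adjoin_of_forall_mem_adjoin_pow {K : Type*} [Field K]
    [NumberField K] {α : K} {d e : ℕ} {m : ℤ} (hα : minpoly ℚ α = X ^ (d * e) - C (m : ℚ))
    (hgen : Algebra.adjoin ℚ {α} = ⊤)
    (hO : ∀ r : ℚ⟮α ^ e⟯, IsIntegral ℤ r → r ∈ Algebra.adjoin ℤ {AdjoinSimple.gen ℚ (α ^ e)})
    {p : ℕ} (hp : p.Prime) (hpe : ¬ (p : ℤ) ∣ e) (hpm : ¬ (p : ℤ) ∣ m) {z : K}
    (hz : IsIntegral ℤ z) : ∃ c : ℤ, ¬ (p : ℤ) ∣ c ∧ c • z ∈ Algebra.adjoin ℤ {α} := by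
  obtain ⟨-, hminF⟩ := minpoly_pow_eq_X_pow_sub_C hα hgen
  have hgenF : Algebra.adjoin ℚ⟮α ^ e⟯ {α} = ⊤ := by
    rw [← Algebra.adjoin_adjoin_of_tower ℚ, hgen, Algebra.coe_top, Algebra.adjoin_univ]
  have hαZ := isIntegral_of_minpoly_eq_X_pow_sub_C hα
  obtain ⟨s, hs, hmem⟩ := smul_mem_adjoin_of_minpoly_eq_X_pow_sub_C (R := 𝓞 ℚ⟮α ^ e⟯)
    (B := PowerBasis.ofAdjoinEqTop hαZ.tower_top hgenF) hαZ.tower_top hminF hz.tower_top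
  rw [PowerBasis.ofAdjoinEqTop_gen, AdjoinSimple.algebraMap_gen] at hmem
  have hle : (Algebra.adjoin (𝓞 ℚ⟮α ^ e⟯) {α}).restrictScalars ℤ ≤ Algebra.adjoin ℤ {α} := by
    rw [Algebra.Subalgebra.restrictScalars_adjoin]
    refine sup_le ?_ le_rfl
    rintro _ ⟨r, rfl⟩
    have hr := (Subalgebra.mem_map (f := IsScalarTower.toAlgHom ℤ ℚ⟮α ^ e⟯ K)).mpr
      ⟨_, hO r r.isIntegral_coe, rfl⟩
    rw [AlgHom.map_adjoin_singleton, IsScalarTower.coe_toAlgHom', AdjoinSimple.algebraMap_gen] at hr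
    exact Algebra.adjoin_singleton_le (pow_mem (Algebra.self_mem_adjoin_singleton ℤ α) e) hr
  have hroot : (m : K) = (α ^ e) ^ d := by
    have := minpoly.aeval ℚ α
    rw [hα, map_sub, map_pow, aeval_X, aeval_C, sub_eq_zero, map_intCast] at this
    rw [← pow_mul, mul_comm, this]
  obtain ⟨d, rfl⟩ := Nat.exists_eq_add_one.mpr
    (Nat.pos_of_ne_zero (Nat.mul_ne_zero_iff.mp (ne_zero_of_minpoly_eq_X_pow_sub_C hα)).1)
  have hpZ : Prime (p : ℤ) := Nat.prime_iff_prime_int.mp hp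
  -- `(α ^ e) ^ (d + 1) = m`, so a power of `α ^ e` turns `(α ^ e) ^ (e - 1)` into `m ^ (e - 1)`.
  refine ⟨s * e ^ e * m ^ (e - 1),
    fun hpc ↦ (hpZ.dvd_or_dvd_of_dvd_mul_pow_mul_pow hs hpc).elim hpe hpm, ?_⟩
  convert Subalgebra.mul_mem _
    (pow_mem (Algebra.self_mem_adjoin_singleton ℤ α) (e * d * (e - 1))) (hle hmem) using 1
  rw [zsmul_eq_mul, zsmul_eq_mul]
  push_cast
  rw [hroot]
  ring

theorem exists_not_dvd_smul_mem_adjoin_of_prime_pow_mul {K : Type*} [Field K]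
    [NumberField K] {α : K} {p k e : ℕ} {m : ℤ} (hp : p.Prime) (hsf : Squarefree m)
    (hm : ¬ (p : ℤ) ^ 2 ∣ m ^ p ^ k - m) (hpe : ¬ (p : ℤ) ∣ e) (hpm : ¬ (p : ℤ) ∣ m)
    (hα : minpoly ℚ α = X ^ (p ^ k * e) - C (m : ℚ)) (hgen : Algebra.adjoin ℚ {α} = ⊤) {z : K}
    (hz : IsIntegral ℤ z) : ∃ c : ℤ, ¬ (p : ℤ) ∣ c ∧ c • z ∈ Algebra.adjoin ℤ {α} := by
  have hw := (minpoly_gen ℚ (α ^ e)).trans (minpoly_pow_eq_X_pow_sub_C hα hgen).1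
  exact exists_not_dvd_smul_mem_adjoin_of_forall_mem_adjoin_pow hα hgen
    (fun r hr ↦ mem_adjoin_of_minpoly_eq_X_pow_sub_C_of_prime_pow hp hsf hm hw
      (adjoin.powerBasis (Algebra.IsIntegral.isIntegral (R := ℚ) (α ^ e))).adjoin_gen_eq_top hr)
    hp hpe hpm hz

end Tower

theorem Int.not_dvd_pow_sub_self_of_forall_zmod {q n : ℕ} {m : ℤ} (roots : List ℤ)
    (hroots : ∀ x : ZMod q, x ^ n = x → ∃ r ∈ roots, x = r)
    (hm : ∀ r ∈ roots, ¬ m ≡ r [ZMOD q]) : ¬ (q : ℤ) ∣ m ^ n - m := by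
  rw [← ZMod.intCast_zmod_eq_zero_iff_dvd, Int.cast_sub, Int.cast_pow, sub_eq_zero]
  intro h
  obtain ⟨r, hr, hmr⟩ := hroots _ h
  exact hm r hr ((ZMod.intCast_eq_intCast_iff _ _ _).mp hmr)

theorem Nat.Prime.eq_two_or_eq_three_or_eq_five_of_dvd_sixty {p : ℕ} (hp : p.Prime) (h : p ∣ 60) :
    p = 2 ∨ p = 3 ∨ p = 5 := by
  have := Nat.le_of_dvd (by norm_num) h
  interval_cases p <;> simp_all +decide

theorem NumberField.RingOfIntegers.adjoin_eq_top_of_forall_mem_adjoin {K : Type*} [Field K]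
    [NumberField K] (θ : 𝓞 K) (h : ∀ z : K, IsIntegral ℤ z → z ∈ Algebra.adjoin ℤ {(θ : K)}) :
    Algebra.adjoin ℤ {θ} = ⊤ := by
  refine eq_top_iff.mpr fun x _ ↦ ?_
  have hx := h x x.isIntegral_coe
  have hmap : (Algebra.adjoin ℤ {θ}).map (IsScalarTower.toAlgHom ℤ (𝓞 K) K) =
      Algebra.adjoin ℤ {(θ : K)} := AlgHom.map_adjoin_singleton _ _
  rw [← hmap] at hx
  obtain ⟨y, hy, hyx⟩ := Subalgebra.mem_map.mp hx
  rwa [RingOfIntegers.coe_injective hyx] at hy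

theorem pure_deg60_monogenic_general
    (m : ℤ) (hsf : Squarefree m)
    (h4 : ¬ m ≡ 1 [ZMOD 4])
    (h9 : ¬ m ≡ 1 [ZMOD 9]) (h9' : ¬ m ≡ -1 [ZMOD 9])
    (h25 : ¬ m ≡ 1 [ZMOD 25]) (h25' : ¬ m ≡ -1 [ZMOD 25])
    (h25'' : ¬ m ≡ 7 [ZMOD 25]) (h25''' : ¬ m ≡ -7 [ZMOD 25])
    (hirr : Irreducible ((X : ℚ[X]) ^ 60 - C (m : ℚ)))
    (K : Type*) [Field K] [NumberField K] (α : K)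
    (hα : α ^ 60 = (m : K))
    (hgen : Algebra.adjoin ℚ {α} = ⊤) :
    ∃ θ : 𝓞 K, Algebra.adjoin ℤ {θ} = ⊤ := by
  have hmin : minpoly ℚ α = X ^ 60 - C (m : ℚ) := (minpoly.eq_of_irreducible_of_monic hirr
    (by simp [hα]) (monic_X_pow_sub_C _ (by norm_num))).symm
  refine ⟨⟨α, isIntegral_of_minpoly_eq_X_pow_sub_C hmin⟩,
    RingOfIntegers.adjoin_eq_top_of_forall_mem_adjoin _ fun z hz ↦
      Subalgebra.mem_of_forall_prime_exists_not_dvd_smul_mem fun p hp ↦ ?_⟩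
  by_cases hpm : ¬ (p : ℤ) ∣ (60 : ℕ) ∨ (p : ℤ) ∣ m
  · exact exists_not_dvd_smul_mem_adjoin_of_minpoly_eq_X_pow_sub_C hsf hmin hgen hp hpm hz
  obtain ⟨hp60, hpm⟩ : (p : ℤ) ∣ (60 : ℕ) ∧ ¬ (p : ℤ) ∣ m := by tauto
  have hm0 : ∀ q : ℤ, (p : ℤ) ∣ q → ¬ m ≡ 0 [ZMOD q] := fun q hpq h ↦
    hpm (hpq.trans (Int.modEq_zero_iff_dvd.mp h))
  have hsplit : ∀ k e : ℕ, p ^ k * e = 60 → ¬ (p : ℤ) ∣ e → ¬ (p : ℤ) ^ 2 ∣ m ^ p ^ k - m →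
      ∃ c : ℤ, ¬ (p : ℤ) ∣ c ∧ c • z ∈ Algebra.adjoin ℤ {α} := fun k e hke hpe hm ↦
    exists_not_dvd_smul_mem_adjoin_of_prime_pow_mul hp hsf hm hpe hpm (by rw [hmin, hke]) hgen hz
  rcases hp.eq_two_or_eq_three_or_eq_five_of_dvd_sixty (by exact_mod_cast hp60) with rfl | rfl | rfl
  · exact hsplit 2 15 rfl (by decide) (by
      exact_mod_cast Int.not_dvd_pow_sub_self_of_forall_zmod (q := 2 ^ 2) [0, 1] (by decide)
        (by simp [h4, hm0 4 (by norm_num)]))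
  · exact hsplit 1 20 rfl (by decide) (by
      exact_mod_cast Int.not_dvd_pow_sub_self_of_forall_zmod (q := 3 ^ 2) [0, 1, -1] (by decide)
        (by simp [h9, h9', hm0 9 (by norm_num)]))
  · exact hsplit 1 12 rfl (by decide) (by
      exact_mod_cast Int.not_dvd_pow_sub_self_of_forall_zmod (q := 5 ^ 2) [0, 1, -1, 7, -7]
        (by decide) (by simp [h25, h25', h25'', h25''', hm0 25 (by norm_num)]))

/-- If `m ≠ ±1` is squarefree with `m ≢ 1 (mod 4)`, `m ≢ ±1 (mod 9)` and
`m ≢ ±1, ±7 (mod 25)`, then the pure number field `K = ℚ(α)`, `α` a root of the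
irreducible polynomial `x^60 - m`, is monogenic: its ring of integers has a power
integral basis. -/
theorem pure_deg60_monogenic
    (m : ℤ) (hsf : Squarefree m) (hm1 : m ≠ 1) (hm2 : m ≠ -1)
    (h4 : ¬ m ≡ 1 [ZMOD 4])
    (h9 : ¬ m ≡ 1 [ZMOD 9]) (h9' : ¬ m ≡ -1 [ZMOD 9])
    (h25 : ¬ m ≡ 1 [ZMOD 25]) (h25' : ¬ m ≡ -1 [ZMOD 25])
    (h25'' : ¬ m ≡ 7 [ZMOD 25]) (h25''' : ¬ m ≡ -7 [ZMOD 25])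
    (hirr : Irreducible ((X : ℚ[X]) ^ 60 - C (m : ℚ)))
    (K : Type*) [Field K] [NumberField K] (α : K)
    (hα : α ^ 60 = (m : K))
    (hgen : Algebra.adjoin ℚ {α} = ⊤) :
    ∃ θ : 𝓞 K, Algebra.adjoin ℤ {θ} = ⊤ :=
  pure_deg60_monogenic_general m hsf h4 h9 h9' h25 h25' h25'' h25''' hirr K α hα hgen
end

section
/- Let K be a number field with ring of integers Z_K, let p be a rational prime, and let f be a positive integer. Let P_f be the number of distinct prime ideals of Z_K lying above p with residue degree f, and let N_f be the number of monic irreducible polynomials of degree f in F_p[x]. If P_f > N_f, then p is a common index divisor of K, i.e., p divides the index (Z_K : ℤ[θ]) for every θ ∈ Z_K with K = ℚ(θ). -/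
/-!
If `p` does not divide the index of `ℤ[θ]` in `𝓞 K`, then it does not divide the exponent of
the conductor of `θ` either, and Dedekind–Kummer matches the primes of `𝓞 K` above `p`
bijectively with the monic irreducible factors of the minimal polynomial of `θ` modulo `p`,
the residue degree of a prime being the degree of its factor. So at most `N_f` primes above `p`
have residue degree `f`.
-/

open Polynomial NumberField Ideal RingOfIntegers

theorem Polynomial.finite_setOf_natDegree_le (R : Type*) [Semiring R] [Finite R] (n : ℕ) :
    {g : R[X] | g.natDegree ≤ n}.Finite := by
  refine Set.Finite.of_finite_image (f := fun g : R[X] => fun i : Fin (n + 1) => g.coeff i)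
    (Set.toFinite _) fun g hg g' hg' heq => ?_
  refine (ext_iff_natDegree_le hg hg').mpr fun i hi => ?_
  exact congrFun heq ⟨i, Nat.lt_succ_of_le hi⟩

namespace RingOfIntegers

variable {K : Type*} [Field K]

theorem exponent_dvd_index (θ : 𝓞 K) :
    exponent θ ∣ ((Algebra.adjoin ℤ {θ}).toSubring.toAddSubgroup : AddSubgroup (𝓞 K)).index := by
  set N := ((Algebra.adjoin ℤ {θ}).toSubring.toAddSubgroup : AddSubgroup (𝓞 K)).index
  have hN : ((N : ℤ) : 𝓞 K) ∈ conductor ℤ θ := fun b => by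
    simpa [nsmul_eq_mul] using (Algebra.adjoin ℤ {θ}).toSubring.toAddSubgroup.nsmul_index_mem b
  exact_mod_cast Int.cast_mem_ideal_iff.mp hN

theorem monic_and_irreducible_of_mem_monicFactorsMod {θ : 𝓞 K} {p : ℕ} [Fact p.Prime]
    {g : (ZMod p)[X]} (hg : g ∈ monicFactorsMod θ p) : g.Monic ∧ Irreducible g := by
  classical
  have h₀ : (minpoly ℤ θ).map (Int.castRingHom (ZMod p)) ≠ 0 :=
    map_monic_ne_zero (minpoly.monic θ.isIntegral)
  obtain ⟨hirr, hmon, -⟩ :=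
    (Polynomial.mem_normalizedFactors_iff h₀).mp (Multiset.mem_toFinset.mp hg)
  exact ⟨hmon, hirr⟩

end RingOfIntegers

namespace NumberField.Ideal

variable {K : Type*} [Field K] [NumberField K] {θ : 𝓞 K} {p : ℕ} [Fact p.Prime]

theorem natDegree_primesOverSpanEquivMonicFactorsMod (hp : ¬ p ∣ exponent θ)
    (P : primesOver (span {(p : ℤ)}) (𝓞 K)) :
    (primesOverSpanEquivMonicFactorsMod hp P : (ZMod p)[X]).natDegree =
      (P : Ideal (𝓞 K)).inertiaDeg ℤ := by
  rw [← inertiaDeg_primesOverSpanEquivMonicFactorsMod_symm_apply' hp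
    (primesOverSpanEquivMonicFactorsMod hp P).2, Subtype.coe_eta, Equiv.symm_apply_apply]

theorem card_primesOver_inertiaDeg_le (hp : ¬ p ∣ exponent θ) (f : ℕ) :
    Nat.card {P : Ideal (𝓞 K) //
      P.IsPrime ∧ P.comap (algebraMap ℤ (𝓞 K)) = span {(p : ℤ)} ∧
      inertiaDeg' (span {(p : ℤ)}) P = f} ≤
    Nat.card {g : (ZMod p)[X] // g.Monic ∧ Irreducible g ∧ g.natDegree = f} := by
  have : Finite {g : (ZMod p)[X] // g.Monic ∧ Irreducible g ∧ g.natDegree = f} :=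
    ((finite_setOf_natDegree_le (ZMod p) f).subset fun g hg => hg.2.2.le).to_subtype
  have := Int.ideal_span_isMaximal_of_prime p
  let toPrimesOver (P : {P : Ideal (𝓞 K) //
      P.IsPrime ∧ P.comap (algebraMap ℤ (𝓞 K)) = span {(p : ℤ)} ∧
      inertiaDeg' (span {(p : ℤ)}) P = f}) : primesOver (span {(p : ℤ)}) (𝓞 K) :=
    ⟨P.1, P.2.1, (liesOver_iff _ _).mpr P.2.2.1.symm⟩
  refine Nat.card_le_card_of_injective
    (fun P => ⟨primesOverSpanEquivMonicFactorsMod hp (toPrimesOver P), ?_⟩) fun P Q hPQ => ?_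
  · obtain ⟨hmon, hirr⟩ := monic_and_irreducible_of_mem_monicFactorsMod
      (primesOverSpanEquivMonicFactorsMod hp (toPrimesOver P)).2
    have := primesOver.isMaximal (toPrimesOver P)
    refine ⟨hmon, hirr, ?_⟩
    rw [natDegree_primesOverSpanEquivMonicFactorsMod,
      ← inertiaDeg'_eq_inertiaDeg (span {(p : ℤ)})]
    exact P.2.2.2
  · have : toPrimesOver P = toPrimesOver Q :=
      (primesOverSpanEquivMonicFactorsMod hp).injective (Subtype.ext (Subtype.mk.inj hPQ))
    exact Subtype.ext (Subtype.mk.inj this)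

end NumberField.Ideal

theorem prime_common_index_divisor_of_card_primes_gt_general
    (K : Type*) [Field K] [NumberField K] (p : ℕ) (hp : p.Prime) (f : ℕ)
    (h : Nat.card {g : Polynomial (ZMod p) // g.Monic ∧ Irreducible g ∧ g.natDegree = f} <
         Nat.card {P : Ideal (𝓞 K) //
           P.IsPrime ∧ P.comap (algebraMap ℤ (𝓞 K)) = Ideal.span {(p : ℤ)} ∧
           Ideal.inertiaDeg' (Ideal.span {(p : ℤ)}) P = f}) :
    ∀ θ : 𝓞 K, Algebra.adjoin ℚ {(θ : K)} = ⊤ →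
      (p : ℕ) ∣ ((Algebra.adjoin ℤ {θ}).toSubring.toAddSubgroup :
        AddSubgroup (𝓞 K)).index := by
  have := Fact.mk hp
  intro θ _
  by_contra hindex
  have hexp : ¬ p ∣ exponent θ := fun hdvd => hindex (hdvd.trans (exponent_dvd_index θ))
  exact (NumberField.Ideal.card_primesOver_inertiaDeg_le hexp f).not_gt h

/-- **Engstrom/Hensel criterion for common index divisors.** Let `K` be a number field,
`p` a rational prime and `f ≥ 1`. If the number of distinct prime ideals of `𝓞 K` lying
above `p` with residue degree `f` exceeds the number of monic irreducible polynomials of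
degree `f` over `𝔽_p`, then `p` divides the index `(𝓞 K : ℤ[θ])` for every generator
`θ ∈ 𝓞 K` of `K`. -/
theorem prime_common_index_divisor_of_card_primes_gt
    (K : Type*) [Field K] [NumberField K] (p : ℕ) (hp : p.Prime) (f : ℕ) (hf : 0 < f)
    (h : Nat.card {g : Polynomial (ZMod p) // g.Monic ∧ Irreducible g ∧ g.natDegree = f} <
         Nat.card {P : Ideal (𝓞 K) //
           P.IsPrime ∧ P.comap (algebraMap ℤ (𝓞 K)) = Ideal.span {(p : ℤ)} ∧
           Ideal.inertiaDeg' (Ideal.span {(p : ℤ)}) P = f}) :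
    ∀ θ : 𝓞 K, Algebra.adjoin ℚ {(θ : K)} = ⊤ →
      (p : ℕ) ∣ ((Algebra.adjoin ℤ {θ}).toSubring.toAddSubgroup :
        AddSubgroup (𝓞 K)).index :=
  prime_common_index_divisor_of_card_primes_gt_general K p hp f h
end

section
/- Let m ≠ ±1 be a squarefree integer not divisible by 3, let α be a complex root of the irreducible polynomial F(x) = x^60 − m over ℚ, and let K = ℚ(α) with ring of integers Z_K. Then 3 does not divide the index (Z_K : ℤ[α]) if and only if m² ≢ 1 (mod 9). -/
/-!
Since `ℤ[α]` has full rank in `𝓞 K`, the index is finite, and `3` divides it iff some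
`θ ∉ ℤ[α]` has `3θ ∈ ℤ[α]`. Write the degree as `3d` (here `d = 20`) and put `δ = α ^ d - m`.
Modulo 3, `X ^ (3d) - m ≡ (X ^ d - m) ^ 3` with `X ^ d - m` squarefree; since some power of an
element `g(α)` of `3 𝓞 K ∩ ℤ[α]` lies in `3 ℤ[α]`, the reduction of `g` is divisible by
`X ^ d - m`, i.e. `g(α) ∈ (3, δ)`. Moreover `δ ^ 3 = 3u` with `u ≡ (m - m ^ 3) / 3 (mod δ)`.

If `m ^ 2 ≢ 1 (mod 9)`, then `u` is a unit modulo `(3, δ)`. Cubing `3θ = δ ^ k q` with `k < 3`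
shows `u ^ k q ^ 3 ∈ 3 𝓞 K`, hence `q ∈ (3, δ)`, and after changing `θ` by an element of
`ℤ[α]` we get `3θ = δ ^ (k + 1) q'`. At `k = 3` this reads `θ = uq ∈ ℤ[α]`.
If `m ^ 2 ≡ 1 (mod 9)`, then `γ = m α ^ d` has `γ ^ 3 = m ^ 4 ≡ 1 (mod 9)`, and
`(1 + γ + γ ^ 2) / 3` is an algebraic integer outside `ℤ[α]`.
-/

open Polynomial NumberField

theorem AddSubgroup.prime_dvd_index_iff {G : Type*} [AddCommGroup G] (H : AddSubgroup G)
    [H.FiniteIndex] {p : ℕ} (hp : p.Prime) : p ∣ H.index ↔ ∃ x ∉ H, p • x ∈ H := by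
  have := Fact.mk hp
  simp only [← QuotientAddGroup.eq_zero_iff, QuotientAddGroup.mk_nsmul]
  constructor
  · intro h
    obtain ⟨x, hx⟩ := exists_prime_addOrderOf_dvd_card' p h
    obtain ⟨x, rfl⟩ := QuotientAddGroup.mk_surjective x
    refine ⟨x, fun h0 => hp.ne_one ?_, hx ▸ addOrderOf_nsmul_eq_zero _⟩
    rw [← hx, h0, addOrderOf_zero]
  · rintro ⟨x, hx, hpx⟩
    rw [AddSubgroup.index, ← addOrderOf_eq_prime hpx hx]
    exact _root_.addOrderOf_dvd_natCard _

theorem IsIntegral.exists_smul_pow_eq_smul_aeval {R B : Type*} [CommRing R] [CommRing B]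
    [Algebra R B] [Nontrivial B] {θ : B} (hθ : IsIntegral R θ) (r : R) :
    ∃ n ≠ 0, ∃ g : R[X], (r • θ) ^ n = r • aeval (r • θ) g := by
  obtain ⟨g, hg⟩ : C r ∣ (minpoly R θ).scaleRoots r - X ^ (minpoly R θ).natDegree := by
    refine (C_dvd_iff_dvd_coeff _ _).2 fun i => ?_
    rw [coeff_sub, coeff_scaleRoots, coeff_X_pow]
    rcases lt_trichotomy i (minpoly R θ).natDegree with hi | rfl | hi
    · rw [if_neg hi.ne, sub_zero]
      exact dvd_mul_of_dvd_right (dvd_pow_self r (Nat.sub_ne_zero_of_lt hi)) _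
    · simp [(minpoly.monic hθ).leadingCoeff]
    · simp [coeff_eq_zero_of_natDegree_lt hi, hi.ne']
  refine ⟨(minpoly R θ).natDegree, (minpoly.natDegree_pos hθ).ne', -g, ?_⟩
  have hroot : aeval (r • θ) ((minpoly R θ).scaleRoots r) = 0 := by
    rw [Algebra.smul_def]
    exact scaleRoots_aeval_eq_zero (minpoly.aeval R θ)
  rw [sub_eq_iff_eq_add'.mp hg] at hroot
  simpa [Algebra.smul_def, add_eq_zero_iff_eq_neg] using hroot

theorem Polynomial.exists_eq_mul_add_C_mul_of_map_dvd {n : ℕ} {T g : ℤ[X]} (hT : T.Monic)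
    (h : T.map (Int.castRingHom (ZMod n)) ∣ g.map (Int.castRingHom (ZMod n))) :
    ∃ Q R, g = T * Q + C (n : ℤ) * R := by
  have hmod : g %ₘ T ∈ RingHom.ker (mapRingHom (Int.castRingHom (ZMod n))) := by
    rw [RingHom.mem_ker, coe_mapRingHom, map_modByMonic _ hT]
    exact (modByMonic_eq_zero_iff_dvd (hT.map _)).2 h
  rw [ker_mapRingHom, ZMod.ker_intCastRingHom, Ideal.map_span, Set.image_singleton,
    Ideal.mem_span_singleton] at hmod
  obtain ⟨R, hR⟩ := hmod
  exact ⟨g /ₘ T, R, by rw [← hR, add_comm, modByMonic_add_div]⟩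

theorem Polynomial.X_pow_sub_C_pow_char {p : ℕ} [Fact p.Prime] (d : ℕ) (a : ZMod p) :
    (X ^ d - C a) ^ p = X ^ (d * p) - C a := by
  rw [sub_pow_expChar, ← pow_mul, ← C_pow, ZMod.pow_card]

theorem Polynomial.squarefree_X_pow_sub_C_intCast {p : ℕ} [Fact p.Prime] {d : ℕ}
    (hd : ¬ p ∣ d) {m : ℤ} (hm : ¬ (p : ℤ) ∣ m) : Squarefree (X ^ d - C (m : ZMod p)) :=
  (separable_X_pow_sub_C _ (by rwa [Ne, ZMod.natCast_eq_zero_iff])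
    (by rwa [Ne, ZMod.intCast_zmod_eq_zero_iff_dvd])).squarefree

theorem Int.exists_sub_pow_three_eq_three_mul_not_dvd {m : ℤ} (hm : ¬ 3 ∣ m)
    (h9 : ¬ m ^ 2 ≡ 1 [ZMOD 9]) : ∃ c, m - m ^ 3 = 3 * c ∧ ¬ 3 ∣ c := by
  obtain ⟨c, hc⟩ : (3 : ℤ) ∣ m - m ^ 3 := by
    have := (ZMod.intCast_zmod_eq_zero_iff_dvd (m - m ^ 3) 3).1 <| by
      push_cast
      generalize (m : ZMod 3) = x
      revert x
      decide
    exact_mod_cast this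
  refine ⟨c, hc, fun ⟨e, he⟩ => h9 (Int.modEq_iff_dvd.2 ?_)⟩
  have h9m : IsCoprime (9 : ℤ) m := by
    simpa using ((Int.prime_three.coprime_iff_not_dvd).2 hm).pow_left (m := 2)
  exact h9m.dvd_of_dvd_mul_right ⟨e, by linear_combination hc + 3 * he⟩

theorem isIntegral_one_add_add_sq_div_three {K : Type*} [Field K] [CharZero K] {γ : K} {k : ℤ}
    (hγ : γ ^ 3 = 1 - 9 * k) : IsIntegral ℤ ((1 + γ + γ ^ 2) / 3) := by
  refine ⟨X ^ 3 - X ^ 2 + C (3 * k) * X - C (3 * k ^ 2), by monicity!, ?_⟩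
  rw [← aeval_def]
  simp only [map_sub, map_add, map_mul, map_pow, aeval_X, map_ofNat, map_intCast, eq_intCast]
  linear_combination (γ ^ 3 + 3 * γ ^ 2 + 3 * γ + 2 - 9 * k) / 27 * hγ

theorem exists_sub_pow_three_eq_three_mul_aeval {B : Type*} [CommRing B] {α : B} {d : ℕ}
    {m c : ℤ} (hα : α ^ (d * 3) = m) (hc : m - m ^ 3 = 3 * c) (hc3 : ¬ 3 ∣ c) :
    ∃ U : ℤ[X], (α ^ d - m) ^ 3 = 3 * aeval α U ∧
      IsCoprime (X ^ d - C (m : ZMod 3)) (U.map (Int.castRingHom (ZMod 3))) := by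
  refine ⟨C c - C m * X ^ d * (X ^ d - C m), ?_, ?_⟩
  · have hcB : (m : B) - m ^ 3 = 3 * c := by exact_mod_cast congrArg (Int.cast : ℤ → B) hc
    simp only [map_sub, map_mul, map_pow, aeval_X, map_intCast, eq_intCast]
    rw [pow_mul] at hα
    linear_combination hα + hcB
  · have hc0 : IsCoprime (X ^ d - C (m : ZMod 3)) (C (c : ZMod 3)) := by
      have hunit : IsUnit (C (c : ZMod 3)) := by
        rw [isUnit_C, isUnit_iff_ne_zero, Ne, ZMod.intCast_zmod_eq_zero_iff_dvd]
        exact_mod_cast hc3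
      simpa using (isCoprime_mul_unit_left_right hunit (X ^ d - C (m : ZMod 3)) 1).2
        isCoprime_one_right
    have hU : (C c - C m * X ^ d * (X ^ d - C m)).map (Int.castRingHom (ZMod 3)) =
        C (c : ZMod 3) + (X ^ d - C (m : ZMod 3)) * -(C (m : ZMod 3) * X ^ d) := by
      simp only [Polynomial.map_sub, Polynomial.map_mul, Polynomial.map_pow, Polynomial.map_X,
        Polynomial.map_C, Int.coe_castRingHom]
      ring
    exact hU ▸ hc0.add_mul_left_right _

section RingOfIntegers

variable {K : Type*} [Field K] [NumberField K] {n d : ℕ} {m : ℤ} {α : 𝓞 K}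

theorem finiteIndex_adjoin_singleton_of_adjoin_eq_top (hgen : Algebra.adjoin ℚ {(α : K)} = ⊤) :
    ((Algebra.adjoin ℤ {α}).toSubring.toAddSubgroup).FiniteIndex := by
  have hαℤ : IsIntegral ℤ α := Algebra.IsIntegral.isIntegral α
  have hαℚ : IsIntegral ℚ (α : K) := Algebra.IsIntegral.isIntegral _
  have hrank : Module.finrank ℤ (Subalgebra.toSubmodule (Algebra.adjoin ℤ {α})) =
      Module.finrank ℤ (𝓞 K) := by
    rw [Subalgebra.finrank_toSubmodule, RingOfIntegers.rank,
      (Algebra.adjoin.powerBasis' hαℤ).finrank, (PowerBasis.ofAdjoinEqTop hαℚ hgen).finrank,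
      Algebra.adjoin.powerBasis'_dim, PowerBasis.ofAdjoinEqTop_dim,
      RingOfIntegers.coe_eq_algebraMap, minpoly.isIntegrallyClosed_eq_field_fractions ℚ K hαℤ,
      (minpoly.monic hαℤ).natDegree_map]
  have := (Subalgebra.toSubmodule (Algebra.adjoin ℤ {α})).finiteQuotientOfFreeOfRankEq hrank
  exact @AddSubgroup.finiteIndex_of_finite_quotient _ _ _ this

theorem X_pow_sub_C_dvd_of_aeval_eq_zero (hirr : Irreducible (X ^ n - C (m : ℚ)))
    (hα : α ^ n = m) {p : ℤ[X]} (hp : aeval α p = 0) : X ^ n - C m ∣ p := by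
  have hn : n ≠ 0 := ne_zero_of_irreducible_X_pow_sub_C hirr
  have hroot : aeval (α : K) (X ^ n - C (m : ℚ)) = 0 := by
    simpa [sub_eq_zero] using congrArg ((↑) : 𝓞 K → K) hα
  have hmin := minpoly.eq_of_irreducible_of_monic hirr hroot (monic_X_pow_sub_C _ hn)
  rw [← map_dvd_map (Int.castRingHom ℚ) Int.cast_injective (monic_X_pow_sub_C _ hn)]
  have := minpoly.dvd ℚ (α : K) (p := p.map (Int.castRingHom ℚ)) (by
    rw [← algebraMap_int_eq, aeval_map_algebraMap, RingOfIntegers.coe_eq_algebraMap,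
      aeval_algebraMap_apply, hp, map_zero])
  simpa [← hmin] using this

theorem X_pow_sub_C_dvd_map_of_aeval_eq_mul {p : ℕ} [Fact p.Prime] (hd : ¬ p ∣ d)
    (hm : ¬ (p : ℤ) ∣ m) (hirr : Irreducible (X ^ (d * p) - C (m : ℚ))) (hα : α ^ (d * p) = m)
    {g : ℤ[X]} {θ : 𝓞 K} (hg : aeval α g = p * θ) :
    X ^ d - C (m : ZMod p) ∣ g.map (Int.castRingHom (ZMod p)) := by
  obtain ⟨n, hn, G, hG⟩ :=
    (Algebra.IsIntegral.isIntegral (R := ℤ) θ).exists_smul_pow_eq_smul_aeval p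
  have hroot : aeval α (g ^ n - C (p : ℤ) * G.comp g) = 0 := by
    simp only [zsmul_eq_mul, Int.cast_natCast, ← hg] at hG
    simp [aeval_comp, hG]
  have hdvd := map_dvd (Int.castRingHom (ZMod p)) (X_pow_sub_C_dvd_of_aeval_eq_zero hirr hα hroot)
  simp only [Polynomial.map_sub, Polynomial.map_pow, Polynomial.map_mul, Polynomial.map_X,
    Polynomial.map_C, Int.coe_castRingHom, Int.cast_natCast, ZMod.natCast_self, C_0, zero_mul,
    sub_zero] at hdvd
  rw [← X_pow_sub_C_pow_char] at hdvd
  exact ((squarefree_X_pow_sub_C_intCast hd hm).dvd_pow_iff_dvd hn).1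
    ((dvd_pow_self _ (Fact.out : p.Prime).ne_zero).trans hdvd)

theorem map_eq_zero_of_aeval_eq_mul_aeval (hirr : Irreducible (X ^ n - C (m : ℚ)))
    (hα : α ^ n = m) {p : ℕ} [Fact p.Prime] {g Q : ℤ[X]} (hdeg : g.natDegree < n)
    (h : aeval α g = p * aeval α Q) :
    g.map (Int.castRingHom (ZMod p)) = 0 := by
  have hdvd := map_dvd (Int.castRingHom (ZMod p))
    (X_pow_sub_C_dvd_of_aeval_eq_zero hirr hα (p := g - C (p : ℤ) * Q) (by simp [h]))
  simp only [Polynomial.map_sub, Polynomial.map_pow, Polynomial.map_mul, Polynomial.map_X,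
    Polynomial.map_C, Int.coe_castRingHom, Int.cast_natCast, ZMod.natCast_self, C_0, zero_mul,
    sub_zero] at hdvd
  refine eq_zero_of_dvd_of_natDegree_lt hdvd ?_
  rw [natDegree_X_pow_sub_C]
  exact natDegree_map_le.trans_lt hdeg

theorem X_pow_sub_C_dvd_map_of_three_mul_eq_pow_mul (hd : ¬ 3 ∣ d) (hm : ¬ 3 ∣ m)
    (hirr : Irreducible (X ^ (d * 3) - C (m : ℚ))) (hα : α ^ (d * 3) = m) {U : ℤ[X]}
    (hU : (α ^ d - m) ^ 3 = 3 * aeval α U)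
    (hcop : IsCoprime (X ^ d - C (m : ZMod 3)) (U.map (Int.castRingHom (ZMod 3))))
    {k : ℕ} (hk : k < 3) {θ : 𝓞 K} {Q : ℤ[X]} (h : 3 * θ = (α ^ d - m) ^ k * aeval α Q) :
    X ^ d - C (m : ZMod 3) ∣ Q.map (Int.castRingHom (ZMod 3)) := by
  have hcube : aeval α (U ^ k * Q ^ 3) = ((3 : ℕ) : 𝓞 K) * (3 ^ (2 - k) * θ ^ 3) := by
    refine mul_left_cancel₀ (pow_ne_zero k (by norm_num : (3 : 𝓞 K) ≠ 0)) ?_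
    calc 3 ^ k * aeval α (U ^ k * Q ^ 3) = ((α ^ d - m) ^ k * aeval α Q) ^ 3 := by
          rw [map_mul, map_pow, map_pow, ← mul_assoc, ← mul_pow, ← hU, mul_pow, ← pow_mul,
            ← pow_mul, mul_comm 3 k]
      _ = 3 ^ (k + (2 - k + 1)) * θ ^ 3 := by rw [← h, show k + (2 - k + 1) = 3 by omega]; ring
      _ = 3 ^ k * (((3 : ℕ) : 𝓞 K) * (3 ^ (2 - k) * θ ^ 3)) := by push_cast; ring
  have hm' : ¬ ((3 : ℕ) : ℤ) ∣ m := by exact_mod_cast hm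
  have hdvd := X_pow_sub_C_dvd_map_of_aeval_eq_mul hd hm' hirr hα hcube
  rw [Polynomial.map_mul, Polynomial.map_pow, Polynomial.map_pow] at hdvd
  exact ((squarefree_X_pow_sub_C_intCast hd hm').dvd_pow_iff_dvd three_ne_zero).1
    ((hcop.pow_right (n := k)).dvd_of_dvd_mul_left hdvd)

theorem mem_adjoin_of_three_mul_eq_pow_mul (hd : ¬ 3 ∣ d) (hm : ¬ 3 ∣ m)
    (hirr : Irreducible (X ^ (d * 3) - C (m : ℚ))) (hα : α ^ (d * 3) = m) {U : ℤ[X]}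
    (hU : (α ^ d - m) ^ 3 = 3 * aeval α U)
    (hcop : IsCoprime (X ^ d - C (m : ZMod 3)) (U.map (Int.castRingHom (ZMod 3))))
    {k : ℕ} (hk : k ≤ 3) {θ : 𝓞 K} {Q : ℤ[X]} (h : 3 * θ = (α ^ d - m) ^ k * aeval α Q) :
    θ ∈ Algebra.adjoin ℤ {α} := by
  induction hj : 3 - k generalizing k θ Q with
  | zero =>
    obtain rfl : k = 3 := by omega
    have : θ = aeval α (U * Q) :=
      mul_left_cancel₀ (by norm_num : (3 : 𝓞 K) ≠ 0) (by rw [h, hU, map_mul]; ring)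
    exact this ▸ aeval_mem_adjoin_singleton ℤ α
  | succ j ih =>
    have hd0 : d ≠ 0 := fun h0 => hd (h0 ▸ dvd_zero 3)
    have hQ3 : (X ^ d - C m).map (Int.castRingHom (ZMod 3)) ∣ Q.map (Int.castRingHom (ZMod 3)) := by
      rw [Polynomial.map_sub, Polynomial.map_pow, map_X, map_C, Int.coe_castRingHom]
      exact X_pow_sub_C_dvd_map_of_three_mul_eq_pow_mul hd hm hirr hα hU hcop (by omega) h
    obtain ⟨Q', R, hQ⟩ := exists_eq_mul_add_C_mul_of_map_dvd (monic_X_pow_sub_C m hd0) hQ3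
    have hrest : θ - aeval α ((X ^ d - C m) ^ k * R) ∈ Algebra.adjoin ℤ {α} := by
      refine ih (k := k + 1) (Q := Q') (by omega) ?_ (by omega)
      rw [mul_sub, h, hQ, Nat.cast_ofNat]
      simp only [map_add, map_mul, map_sub, map_pow, aeval_X, eq_intCast, map_intCast, map_ofNat]
      ring
    have := add_mem hrest (aeval_mem_adjoin_singleton ℤ α (p := (X ^ d - C m) ^ k * R))
    rwa [sub_add_cancel] at this

theorem mem_adjoin_of_three_mul_mem (hd : ¬ 3 ∣ d) (hm : ¬ 3 ∣ m)
    (hirr : Irreducible (X ^ (d * 3) - C (m : ℚ))) (hα : α ^ (d * 3) = m)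
    (h9 : ¬ m ^ 2 ≡ 1 [ZMOD 9]) {θ : 𝓞 K} (h : 3 * θ ∈ Algebra.adjoin ℤ {α}) :
    θ ∈ Algebra.adjoin ℤ {α} := by
  obtain ⟨c, hc, hc3⟩ := Int.exists_sub_pow_three_eq_three_mul_not_dvd hm h9
  obtain ⟨U, hU, hcop⟩ := exists_sub_pow_three_eq_three_mul_aeval hα hc hc3
  rw [Algebra.adjoin_singleton_eq_range_aeval, AlgHom.mem_range] at h
  obtain ⟨Q, hQ⟩ := h
  exact mem_adjoin_of_three_mul_eq_pow_mul hd hm hirr hα hU hcop (k := 0) (by norm_num)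
    (by rw [pow_zero, one_mul, hQ])

theorem exists_notMem_adjoin_three_mul_mem (hirr : Irreducible (X ^ (d * 3) - C (m : ℚ)))
    (hα : α ^ (d * 3) = m) (h9 : m ^ 2 ≡ 1 [ZMOD 9]) :
    ∃ θ ∉ Algebra.adjoin ℤ {α}, 3 * θ ∈ Algebra.adjoin ℤ {α} := by
  have hd : d ≠ 0 := by simpa using ne_zero_of_irreducible_X_pow_sub_C hirr
  set g : ℤ[X] := 1 + C m * X ^ d + C (m ^ 2) * X ^ (2 * d)
  obtain ⟨k, hk⟩ : 9 ∣ 1 - m ^ 4 :=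
    (Int.modEq_iff_dvd.1 h9).trans ⟨1 + m ^ 2, by ring⟩
  have hγ : ((m : K) * (α : K) ^ d) ^ 3 = 1 - 9 * k := by
    have hαK : (α : K) ^ (d * 3) = m := by simpa using congrArg ((↑) : 𝓞 K → K) hα
    rw [mul_pow, ← pow_mul, hαK]
    exact_mod_cast (by linear_combination -hk : m ^ 3 * m = 1 - 9 * k)
  set θ : 𝓞 K := ⟨_, isIntegral_one_add_add_sq_div_three hγ⟩
  have h3θ : 3 * θ = aeval α g := RingOfIntegers.ext <| by
    show (3 : K) * ((1 + m * α ^ d + (m * α ^ d) ^ 2) / 3) = _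
    simp [g]
    ring
  refine ⟨θ, fun hθ => ?_, h3θ ▸ aeval_mem_adjoin_singleton ℤ α⟩
  rw [Algebra.adjoin_singleton_eq_range_aeval, AlgHom.mem_range] at hθ
  obtain ⟨Q, hQ⟩ := hθ
  have hdeg : g.natDegree < d * 3 := by
    have : g.natDegree ≤ 2 * d := by
      simp only [g]
      compute_degree
      omega
    omega
  have := congrArg (eval 0) (map_eq_zero_of_aeval_eq_mul_aeval (p := 3) (Q := Q) hirr hα hdeg
    (by rw [← h3θ, hQ]; norm_num))
  simp [g, hd] at this

end RingOfIntegers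

theorem pure_deg60_three_not_dvd_index_iff_general
    (m : ℤ) (h3 : ¬ (3 : ℤ) ∣ m)
    (hirr : Irreducible ((X : ℚ[X]) ^ 60 - C (m : ℚ)))
    (K : Type*) [Field K] [NumberField K] (α : 𝓞 K)
    (hα : α ^ 60 = (m : 𝓞 K))
    (hgen : Algebra.adjoin ℚ {(α : K)} = ⊤) :
    (¬ 3 ∣ ((Algebra.adjoin ℤ {α}).toSubring.toAddSubgroup :
        AddSubgroup (𝓞 K)).index) ↔ ¬ m ^ 2 ≡ 1 [ZMOD 9] := by
  have := finiteIndex_adjoin_singleton_of_adjoin_eq_top hgen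
  rw [not_iff_not, AddSubgroup.prime_dvd_index_iff _ Nat.prime_three]
  simp only [Subring.mem_toAddSubgroup, Subalgebra.mem_toSubring, nsmul_eq_mul, Nat.cast_ofNat]
  constructor
  · rintro ⟨θ, hθ, h3θ⟩
    by_contra h9
    exact hθ (mem_adjoin_of_three_mul_mem (d := 20) (by norm_num) h3 hirr hα h9 h3θ)
  · exact exists_notMem_adjoin_three_mul_mem (d := 20) hirr hα

/-- If `m ≠ ±1` is a squarefree integer not divisible by `3` and `α ∈ 𝓞 K` a root of the
irreducible polynomial `x^60 - m` generating `K` over `ℚ`, then `3` does not divide the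
index `(𝓞 K : ℤ[α])` if and only if `m² ≢ 1 (mod 9)`. -/
theorem pure_deg60_three_not_dvd_index_iff
    (m : ℤ) (hsf : Squarefree m) (hm1 : m ≠ 1) (hm2 : m ≠ -1) (h3 : ¬ (3 : ℤ) ∣ m)
    (hirr : Irreducible ((X : ℚ[X]) ^ 60 - C (m : ℚ)))
    (K : Type*) [Field K] [NumberField K] (α : 𝓞 K)
    (hα : α ^ 60 = (m : 𝓞 K))
    (hgen : Algebra.adjoin ℚ {(α : K)} = ⊤) :
    (¬ 3 ∣ ((Algebra.adjoin ℤ {α}).toSubring.toAddSubgroup :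
        AddSubgroup (𝓞 K)).index) ↔ ¬ m ^ 2 ≡ 1 [ZMOD 9] :=
  pure_deg60_three_not_dvd_index_iff_general m h3 hirr K α hα hgen
end
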